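/- Unconditional energy stability of the second-order PFC scheme: let τ > 0, h = L/m > 0, 0 < ε < 1, and let (φ^κ)_{κ≥0} be a sequence of periodic grid functions such that for every κ ≥ 1 the triple (φ^{κ−1}, φ^κ, φ^{κ+1}) satisfies one step of the second-order scheme. Then for every κ ≥ 1, F_h(φ^κ) ≤ F_h(φ¹) + ½ ‖∇_h(φ¹ − φ⁰)‖₂². -/
import Mathlib


open Finset Real

/-- The periodic 3D grid with `m` points in each direction. -/
abbrev Grid (m : ℕ) := ZMod m × ZMod m × ZMod m

/-- Forward difference in the `x` direction, with mesh size `h`. -/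
noncomputable def Dx {m : ℕ} (h : ℝ) (φ : Grid m → ℝ) (p : Grid m) : ℝ :=
  (φ (p.1 + 1, p.2.1, p.2.2) - φ p) / h

/-- Forward difference in the `y` direction, with mesh size `h`. -/
noncomputable def Dy {m : ℕ} (h : ℝ) (φ : Grid m → ℝ) (p : Grid m) : ℝ :=
  (φ (p.1, p.2.1 + 1, p.2.2) - φ p) / h

/-- Forward difference in the `z` direction, with mesh size `h`. -/
noncomputable def Dz {m : ℕ} (h : ℝ) (φ : Grid m → ℝ) (p : Grid m) : ℝ :=
  (φ (p.1, p.2.1, p.2.2 + 1) - φ p) / h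

/-- The standard 7-point discrete Laplacian with mesh size `h`. -/
noncomputable def lapH {m : ℕ} (h : ℝ) (φ : Grid m → ℝ) (p : Grid m) : ℝ :=
  (φ (p.1 + 1, p.2.1, p.2.2) + φ (p.1 - 1, p.2.1, p.2.2)
    + φ (p.1, p.2.1 + 1, p.2.2) + φ (p.1, p.2.1 - 1, p.2.2)
    + φ (p.1, p.2.1, p.2.2 + 1) + φ (p.1, p.2.1, p.2.2 - 1)
    - 6 * φ p) / h ^ 2

/-- Discrete `L²` inner product `⟨f, g⟩ = h³ Σ f g`. -/
noncomputable def ip {m : ℕ} [NeZero m] (h : ℝ) (f g : Grid m → ℝ) : ℝ :=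
  h ^ 3 * ∑ p : Grid m, f p * g p

/-- Square of the discrete `L²` norm. -/
noncomputable def norm2sq {m : ℕ} [NeZero m] (h : ℝ) (f : Grid m → ℝ) : ℝ :=
  h ^ 3 * ∑ p : Grid m, (f p) ^ 2

/-- The discrete `L²` norm. -/
noncomputable def norm2 {m : ℕ} [NeZero m] (h : ℝ) (f : Grid m → ℝ) : ℝ :=
  Real.sqrt (norm2sq h f)

/-- Fourth power of the discrete `L⁴` norm. -/
noncomputable def norm4p4 {m : ℕ} [NeZero m] (h : ℝ) (f : Grid m → ℝ) : ℝ :=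
  h ^ 3 * ∑ p : Grid m, (f p) ^ 4

/-- Square of the discrete gradient norm `‖∇_h f‖₂²`. -/
noncomputable def gradsq {m : ℕ} [NeZero m] (h : ℝ) (f : Grid m → ℝ) : ℝ :=
  h ^ 3 * ∑ p : Grid m, ((Dx h f p) ^ 2 + (Dy h f p) ^ 2 + (Dz h f p) ^ 2)

/-- Square of the discrete `H²` norm `‖f‖_{2,2}²`. -/
noncomputable def h22sq {m : ℕ} [NeZero m] (h : ℝ) (f : Grid m → ℝ) : ℝ :=
  norm2sq h f + gradsq h f + norm2sq h (lapH h f)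

/-- The discrete maximum norm `‖f‖_∞`. -/
noncomputable def normInf {m : ℕ} [NeZero m] (f : Grid m → ℝ) : ℝ :=
  ⨆ p : Grid m, |f p|

/-- The discrete PFC energy `F_h`. -/
noncomputable def Fh {m : ℕ} [NeZero m] (h ε : ℝ) (φ : Grid m → ℝ) : ℝ :=
  (1 / 4) * norm4p4 h φ + ((1 - ε) / 2) * norm2sq h φ - gradsq h φ
    + (1 / 2) * norm2sq h (lapH h φ)

/-- The discrete chemical potential `μ^{κ+1/2}` of the second-order scheme, built from
`a = φ^{κ-1}`, `b = φ^κ`, `c = φ^{κ+1}`. -/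
noncomputable def mu {m : ℕ} (h ε : ℝ) (a b c : Grid m → ℝ) : Grid m → ℝ :=
  fun p =>
    (1 / 2) * (c p + b p) * ((1 / 2) * ((c p) ^ 2 + (b p) ^ 2))
      + (1 - ε) * ((1 / 2) * (c p + b p))
      + 3 * lapH h b p - lapH h a p
      + lapH h (fun q => (1 / 2) * lapH h (fun r => c r + b r) q) p

/-- One step of the second-order PFC scheme:
`(φ^{κ+1} - φ^κ)/τ = Δ_h μ^{κ+1/2}` with `a = φ^{κ-1}`, `b = φ^κ`, `c = φ^{κ+1}`. -/
def SchemeStep {m : ℕ} (h τ ε : ℝ) (a b c : Grid m → ℝ) : Prop :=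
  ∀ p : Grid m, (c p - b p) / τ = lapH h (mu h ε a b c) p

noncomputable def gip {m : ℕ} [NeZero m] (h : ℝ) (f g : Grid m → ℝ) : ℝ :=
  h ^ 3 * ∑ p : Grid m, (Dx h f p * Dx h g p + Dy h f p * Dy h g p + Dz h f p * Dz h g p)

variable {m : ℕ} [NeZero m]

lemma sum_shift_x (c : ZMod m) (f : Grid m → ℝ) :
    ∑ p : Grid m, f (p.1 + c, p.2.1, p.2.2) = ∑ p : Grid m, f p := by
  apply Fintype.sum_bijective (fun p : Grid m => ((p.1 + c, p.2.1, p.2.2) : Grid m))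
  · refine ⟨fun p q hpq => ?_, fun q => ⟨(q.1 - c, q.2.1, q.2.2), by simp⟩⟩
    simp only [Prod.ext_iff, add_left_inj] at hpq
    exact Prod.ext hpq.1 (Prod.ext hpq.2.1 hpq.2.2)
  · intro p; rfl

lemma sum_shift_y (c : ZMod m) (f : Grid m → ℝ) :
    ∑ p : Grid m, f (p.1, p.2.1 + c, p.2.2) = ∑ p : Grid m, f p := by
  apply Fintype.sum_bijective (fun p : Grid m => ((p.1, p.2.1 + c, p.2.2) : Grid m))
  · refine ⟨fun p q hpq => ?_, fun q => ⟨(q.1, q.2.1 - c, q.2.2), by simp⟩⟩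
    simp only [Prod.ext_iff, add_left_inj] at hpq
    exact Prod.ext hpq.1 (Prod.ext hpq.2.1 hpq.2.2)
  · intro p; rfl

lemma sum_shift_z (c : ZMod m) (f : Grid m → ℝ) :
    ∑ p : Grid m, f (p.1, p.2.1, p.2.2 + c) = ∑ p : Grid m, f p := by
  apply Fintype.sum_bijective (fun p : Grid m => ((p.1, p.2.1, p.2.2 + c) : Grid m))
  · refine ⟨fun p q hpq => ?_, fun q => ⟨(q.1, q.2.1, q.2.2 - c), by simp⟩⟩
    simp only [Prod.ext_iff, add_left_inj] at hpq
    exact Prod.ext hpq.1 (Prod.ext hpq.2.1 hpq.2.2)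
  · intro p; rfl

lemma tele_x (f g : Grid m → ℝ) :
    ∑ p : Grid m, (f p * g (p.1 - 1, p.2.1, p.2.2) - f (p.1 + 1, p.2.1, p.2.2) * g p
      + f (p.1 + 1, p.2.1, p.2.2) * g (p.1 + 1, p.2.1, p.2.2) - f p * g p) = 0 := by
  have h := sum_shift_x (m := m) 1
    (fun p => f p * g (p.1 - 1, p.2.1, p.2.2) - f p * g p)
  simp only [add_sub_cancel_right] at h
  have e : ∀ p : Grid m, (f p * g (p.1 - 1, p.2.1, p.2.2) - f (p.1 + 1, p.2.1, p.2.2) * g p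
      + f (p.1 + 1, p.2.1, p.2.2) * g (p.1 + 1, p.2.1, p.2.2) - f p * g p)
      = (f p * g (p.1 - 1, p.2.1, p.2.2) - f p * g p)
        - (f (p.1 + 1, p.2.1, p.2.2) * g (p.1 + 1 - 1, p.2.1, p.2.2)
            - f (p.1 + 1, p.2.1, p.2.2) * g (p.1 + 1, p.2.1, p.2.2)) := by
    intro p; simp only [add_sub_cancel_right]; ring
  rw [Finset.sum_congr rfl (fun p _ => e p), Finset.sum_sub_distrib]
  simp only [add_sub_cancel_right] at *
  rw [h]; ring

lemma tele_y (f g : Grid m → ℝ) :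
    ∑ p : Grid m, (f p * g (p.1, p.2.1 - 1, p.2.2) - f (p.1, p.2.1 + 1, p.2.2) * g p
      + f (p.1, p.2.1 + 1, p.2.2) * g (p.1, p.2.1 + 1, p.2.2) - f p * g p) = 0 := by
  have h := sum_shift_y (m := m) 1
    (fun p => f p * g (p.1, p.2.1 - 1, p.2.2) - f p * g p)
  simp only [add_sub_cancel_right] at h
  have e : ∀ p : Grid m, (f p * g (p.1, p.2.1 - 1, p.2.2) - f (p.1, p.2.1 + 1, p.2.2) * g p
      + f (p.1, p.2.1 + 1, p.2.2) * g (p.1, p.2.1 + 1, p.2.2) - f p * g p)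
      = (f p * g (p.1, p.2.1 - 1, p.2.2) - f p * g p)
        - (f (p.1, p.2.1 + 1, p.2.2) * g (p.1, p.2.1 + 1 - 1, p.2.2)
            - f (p.1, p.2.1 + 1, p.2.2) * g (p.1, p.2.1 + 1, p.2.2)) := by
    intro p; simp only [add_sub_cancel_right]; ring
  rw [Finset.sum_congr rfl (fun p _ => e p), Finset.sum_sub_distrib]
  simp only [add_sub_cancel_right] at *
  rw [h]; ring

lemma tele_z (f g : Grid m → ℝ) :
    ∑ p : Grid m, (f p * g (p.1, p.2.1, p.2.2 - 1) - f (p.1, p.2.1, p.2.2 + 1) * g p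
      + f (p.1, p.2.1, p.2.2 + 1) * g (p.1, p.2.1, p.2.2 + 1) - f p * g p) = 0 := by
  have h := sum_shift_z (m := m) 1
    (fun p => f p * g (p.1, p.2.1, p.2.2 - 1) - f p * g p)
  simp only [add_sub_cancel_right] at h
  have e : ∀ p : Grid m, (f p * g (p.1, p.2.1, p.2.2 - 1) - f (p.1, p.2.1, p.2.2 + 1) * g p
      + f (p.1, p.2.1, p.2.2 + 1) * g (p.1, p.2.1, p.2.2 + 1) - f p * g p)
      = (f p * g (p.1, p.2.1, p.2.2 - 1) - f p * g p)
        - (f (p.1, p.2.1, p.2.2 + 1) * g (p.1, p.2.1, p.2.2 + 1 - 1)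
            - f (p.1, p.2.1, p.2.2 + 1) * g (p.1, p.2.1, p.2.2 + 1)) := by
    intro p; simp only [add_sub_cancel_right]; ring
  rw [Finset.sum_congr rfl (fun p _ => e p), Finset.sum_sub_distrib]
  simp only [add_sub_cancel_right] at *
  rw [h]; ring

lemma sbp (h : ℝ) (f g : Grid m → ℝ) : ip h f (lapH h g) = - gip h f g := by
  have key : ∑ p : Grid m, (f p * (g (p.1 + 1, p.2.1, p.2.2) + g (p.1 - 1, p.2.1, p.2.2)
      + g (p.1, p.2.1 + 1, p.2.2) + g (p.1, p.2.1 - 1, p.2.2)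
      + g (p.1, p.2.1, p.2.2 + 1) + g (p.1, p.2.1, p.2.2 - 1) - 6 * g p)
      + ((g (p.1 + 1, p.2.1, p.2.2) - g p) * (f (p.1 + 1, p.2.1, p.2.2) - f p)
        + (g (p.1, p.2.1 + 1, p.2.2) - g p) * (f (p.1, p.2.1 + 1, p.2.2) - f p)
        + (g (p.1, p.2.1, p.2.2 + 1) - g p) * (f (p.1, p.2.1, p.2.2 + 1) - f p))) = 0 := by
    have e : ∀ p : Grid m, (f p * (g (p.1 + 1, p.2.1, p.2.2) + g (p.1 - 1, p.2.1, p.2.2)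
        + g (p.1, p.2.1 + 1, p.2.2) + g (p.1, p.2.1 - 1, p.2.2)
        + g (p.1, p.2.1, p.2.2 + 1) + g (p.1, p.2.1, p.2.2 - 1) - 6 * g p)
        + ((g (p.1 + 1, p.2.1, p.2.2) - g p) * (f (p.1 + 1, p.2.1, p.2.2) - f p)
          + (g (p.1, p.2.1 + 1, p.2.2) - g p) * (f (p.1, p.2.1 + 1, p.2.2) - f p)
          + (g (p.1, p.2.1, p.2.2 + 1) - g p) * (f (p.1, p.2.1, p.2.2 + 1) - f p)))
        = (f p * g (p.1 - 1, p.2.1, p.2.2) - f (p.1 + 1, p.2.1, p.2.2) * g p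
            + f (p.1 + 1, p.2.1, p.2.2) * g (p.1 + 1, p.2.1, p.2.2) - f p * g p)
          + ((f p * g (p.1, p.2.1 - 1, p.2.2) - f (p.1, p.2.1 + 1, p.2.2) * g p
            + f (p.1, p.2.1 + 1, p.2.2) * g (p.1, p.2.1 + 1, p.2.2) - f p * g p)
          + (f p * g (p.1, p.2.1, p.2.2 - 1) - f (p.1, p.2.1, p.2.2 + 1) * g p
            + f (p.1, p.2.1, p.2.2 + 1) * g (p.1, p.2.1, p.2.2 + 1) - f p * g p)) := by
      intro p; ring
    rw [Finset.sum_congr rfl (fun p _ => e p), Finset.sum_add_distrib,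
      Finset.sum_add_distrib, tele_x, tele_y, tele_z]
    ring
  simp only [ip, gip, lapH, Dx, Dy, Dz]
  have l1 : ∑ p : Grid m, f p * ((g (p.1 + 1, p.2.1, p.2.2) + g (p.1 - 1, p.2.1, p.2.2)
      + g (p.1, p.2.1 + 1, p.2.2) + g (p.1, p.2.1 - 1, p.2.2)
      + g (p.1, p.2.1, p.2.2 + 1) + g (p.1, p.2.1, p.2.2 - 1) - 6 * g p) / h ^ 2)
      = (1 / h ^ 2) * ∑ p : Grid m, f p * (g (p.1 + 1, p.2.1, p.2.2) + g (p.1 - 1, p.2.1, p.2.2)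
      + g (p.1, p.2.1 + 1, p.2.2) + g (p.1, p.2.1 - 1, p.2.2)
      + g (p.1, p.2.1, p.2.2 + 1) + g (p.1, p.2.1, p.2.2 - 1) - 6 * g p) := by
    rw [Finset.mul_sum]; exact Finset.sum_congr rfl (fun p _ => by ring)
  have l2 : ∑ p : Grid m, ((f (p.1 + 1, p.2.1, p.2.2) - f p) / h * ((g (p.1 + 1, p.2.1, p.2.2) - g p) / h)
        + (f (p.1, p.2.1 + 1, p.2.2) - f p) / h * ((g (p.1, p.2.1 + 1, p.2.2) - g p) / h)
        + (f (p.1, p.2.1, p.2.2 + 1) - f p) / h * ((g (p.1, p.2.1, p.2.2 + 1) - g p) / h))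
      = (1 / h ^ 2) * ∑ p : Grid m, ((g (p.1 + 1, p.2.1, p.2.2) - g p) * (f (p.1 + 1, p.2.1, p.2.2) - f p)
        + (g (p.1, p.2.1 + 1, p.2.2) - g p) * (f (p.1, p.2.1 + 1, p.2.2) - f p)
        + (g (p.1, p.2.1, p.2.2 + 1) - g p) * (f (p.1, p.2.1, p.2.2 + 1) - f p)) := by
    rw [Finset.mul_sum]; exact Finset.sum_congr rfl (fun p _ => by ring)
  rw [Finset.sum_add_distrib] at key
  rw [l1, l2]
  have key' : ∑ p : Grid m, f p * (g (p.1 + 1, p.2.1, p.2.2) + g (p.1 - 1, p.2.1, p.2.2)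
      + g (p.1, p.2.1 + 1, p.2.2) + g (p.1, p.2.1 - 1, p.2.2)
      + g (p.1, p.2.1, p.2.2 + 1) + g (p.1, p.2.1, p.2.2 - 1) - 6 * g p)
      = - ∑ p : Grid m, ((g (p.1 + 1, p.2.1, p.2.2) - g p) * (f (p.1 + 1, p.2.1, p.2.2) - f p)
        + (g (p.1, p.2.1 + 1, p.2.2) - g p) * (f (p.1, p.2.1 + 1, p.2.2) - f p)
        + (g (p.1, p.2.1, p.2.2 + 1) - g p) * (f (p.1, p.2.1, p.2.2 + 1) - f p)) := by
    linarith
  rw [key']; ring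

lemma gip_comm (h : ℝ) (f g : Grid m → ℝ) : gip h f g = gip h g f := by
  simp only [gip]; congr 1; exact Finset.sum_congr rfl (fun p _ => by ring)

lemma gip_self_nonneg (hh : 0 ≤ h) (f : Grid m → ℝ) : 0 ≤ gip h f f := by
  simp only [gip]
  apply mul_nonneg (by positivity)
  apply Finset.sum_nonneg
  intro p _
  have : Dx h f p * Dx h f p + Dy h f p * Dy h f p + Dz h f p * Dz h f p
      = (Dx h f p) ^ 2 + (Dy h f p) ^ 2 + (Dz h f p) ^ 2 := by ring
  rw [this]; positivity

lemma ip_mu (h ε : ℝ) (a b c : Grid m → ℝ) :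
    ip h (mu h ε a b c) (fun p => c p - b p)
      = (1/4) * norm4p4 h c - (1/4) * norm4p4 h b
        + ((1-ε)/2 * norm2sq h c - (1-ε)/2 * norm2sq h b)
        - gip h (fun p => c p - b p) (fun p => 3 * b p - a p)
        + ((1/2) * norm2sq h (lapH h c) - (1/2) * norm2sq h (lapH h b)) := by
  have e : ∀ p : Grid m, mu h ε a b c p * (c p - b p)
      = ((1/4) * c p ^ 4 - (1/4) * b p ^ 4)
        + ((1-ε)/2 * c p ^ 2 - (1-ε)/2 * b p ^ 2)
        + (c p - b p) * lapH h (fun q => 3 * b q - a q) p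
        + (c p - b p) * lapH h (fun q => (1/2) * lapH h (fun r => c r + b r) q) p := by
    intro p; simp only [mu, lapH]; ring
  have A1 : ∑ p : Grid m, mu h ε a b c p * (c p - b p)
      = ((1/4) * ∑ p : Grid m, c p ^ 4 - (1/4) * ∑ p : Grid m, b p ^ 4)
        + ((1-ε)/2 * ∑ p : Grid m, c p ^ 2 - (1-ε)/2 * ∑ p : Grid m, b p ^ 2)
        + (∑ p : Grid m, (c p - b p) * lapH h (fun q => 3 * b q - a q) p)
        + (∑ p : Grid m, (c p - b p) * lapH h (fun q => (1/2) * lapH h (fun r => c r + b r) q) p) := by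
    rw [Finset.sum_congr rfl (fun p _ => e p)]
    simp only [Finset.sum_add_distrib, Finset.sum_sub_distrib, ← Finset.mul_sum]
  have A2 : h ^ 3 * ∑ p : Grid m, (c p - b p) * lapH h (fun q => 3 * b q - a q) p
      = - gip h (fun p => c p - b p) (fun p => 3 * b p - a p) := by
    have := sbp h (fun p => c p - b p) (fun q => 3 * b q - a q)
    simpa only [ip] using this
  have A3 : h ^ 3 * ∑ p : Grid m, (c p - b p) * lapH h (fun q => (1/2) * lapH h (fun r => c r + b r) q) p
      = (1/2) * (h ^ 3 * ∑ p : Grid m, (lapH h c p) ^ 2)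
        - (1/2) * (h ^ 3 * ∑ p : Grid m, (lapH h b p) ^ 2) := by
    have s1 := sbp h (fun p => c p - b p) (fun q => (1/2) * lapH h (fun r => c r + b r) q)
    have s2 := sbp h (fun q => (1/2) * lapH h (fun r => c r + b r) q) (fun p => c p - b p)
    have hc := gip_comm h (fun p => c p - b p) (fun q => (1/2) * lapH h (fun r => c r + b r) q)
    simp only [ip] at s1 s2
    have key : ∑ p : Grid m, ((1/2) * lapH h (fun r => c r + b r) p) * lapH h (fun p => c p - b p) p
        = ∑ p : Grid m, ((1/2) * (lapH h c p) ^ 2 - (1/2) * (lapH h b p) ^ 2) := by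
      refine Finset.sum_congr rfl (fun p _ => ?_)
      simp only [lapH]; ring
    rw [key] at s2
    simp only [Finset.sum_sub_distrib, ← Finset.mul_sum] at s2
    linear_combination s1 - s2 - hc
  simp only [ip, norm4p4, norm2sq]
  linear_combination h ^ 3 * A1 + A2 + A3

lemma grad_identity (h : ℝ) (a b c : Grid m → ℝ) :
    gip h (fun p => c p - b p) (fun p => 3 * b p - a p)
      + gip h b b - gip h c c
      + (1/2) * gip h (fun p => c p - b p) (fun p => c p - b p)
      - (1/2) * gip h (fun p => b p - a p) (fun p => b p - a p)
      + (1/2) * gip h (fun p => c p - 2 * b p + a p) (fun p => c p - 2 * b p + a p) = 0 := by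
  have e : ∀ p : Grid m,
      (Dx h (fun p => c p - b p) p * Dx h (fun p => 3 * b p - a p) p
        + Dy h (fun p => c p - b p) p * Dy h (fun p => 3 * b p - a p) p
        + Dz h (fun p => c p - b p) p * Dz h (fun p => 3 * b p - a p) p)
      + (Dx h b p * Dx h b p + Dy h b p * Dy h b p + Dz h b p * Dz h b p)
      - (Dx h c p * Dx h c p + Dy h c p * Dy h c p + Dz h c p * Dz h c p)
      + (1/2) * (Dx h (fun p => c p - b p) p * Dx h (fun p => c p - b p) p
        + Dy h (fun p => c p - b p) p * Dy h (fun p => c p - b p) p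
        + Dz h (fun p => c p - b p) p * Dz h (fun p => c p - b p) p)
      - (1/2) * (Dx h (fun p => b p - a p) p * Dx h (fun p => b p - a p) p
        + Dy h (fun p => b p - a p) p * Dy h (fun p => b p - a p) p
        + Dz h (fun p => b p - a p) p * Dz h (fun p => b p - a p) p)
      + (1/2) * (Dx h (fun p => c p - 2 * b p + a p) p * Dx h (fun p => c p - 2 * b p + a p) p
        + Dy h (fun p => c p - 2 * b p + a p) p * Dy h (fun p => c p - 2 * b p + a p) p
        + Dz h (fun p => c p - 2 * b p + a p) p * Dz h (fun p => c p - 2 * b p + a p) p) = 0 := by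
    intro p; simp only [Dx, Dy, Dz]; ring
  have T : ∑ p : Grid m,
      ((Dx h (fun p => c p - b p) p * Dx h (fun p => 3 * b p - a p) p
        + Dy h (fun p => c p - b p) p * Dy h (fun p => 3 * b p - a p) p
        + Dz h (fun p => c p - b p) p * Dz h (fun p => 3 * b p - a p) p)
      + (Dx h b p * Dx h b p + Dy h b p * Dy h b p + Dz h b p * Dz h b p)
      - (Dx h c p * Dx h c p + Dy h c p * Dy h c p + Dz h c p * Dz h c p)
      + (1/2) * (Dx h (fun p => c p - b p) p * Dx h (fun p => c p - b p) p
        + Dy h (fun p => c p - b p) p * Dy h (fun p => c p - b p) p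
        + Dz h (fun p => c p - b p) p * Dz h (fun p => c p - b p) p)
      - (1/2) * (Dx h (fun p => b p - a p) p * Dx h (fun p => b p - a p) p
        + Dy h (fun p => b p - a p) p * Dy h (fun p => b p - a p) p
        + Dz h (fun p => b p - a p) p * Dz h (fun p => b p - a p) p)
      + (1/2) * (Dx h (fun p => c p - 2 * b p + a p) p * Dx h (fun p => c p - 2 * b p + a p) p
        + Dy h (fun p => c p - 2 * b p + a p) p * Dy h (fun p => c p - 2 * b p + a p) p
        + Dz h (fun p => c p - 2 * b p + a p) p * Dz h (fun p => c p - 2 * b p + a p) p)) = 0 := by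
    rw [Finset.sum_congr rfl (fun p _ => e p)]; simp
  simp only [Finset.sum_add_distrib, Finset.sum_sub_distrib, ← Finset.mul_sum] at T
  simp only [gip, Finset.sum_add_distrib, Finset.sum_sub_distrib, ← Finset.mul_sum]
  linear_combination h ^ 3 * T

lemma gradsq_eq (h : ℝ) (f : Grid m → ℝ) : gradsq h f = gip h f f := by
  simp only [gradsq, gip]; congr 1
  exact Finset.sum_congr rfl (fun p _ => by ring)

lemma step_lemma (h ε τ : ℝ) (hh : 0 < h) (hτ : 0 < τ)
    (a b c : Grid m → ℝ) (hst : SchemeStep h τ ε a b c) :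
    Fh h ε c + (1/2) * gradsq h (fun p => c p - b p)
      ≤ Fh h ε b + (1/2) * gradsq h (fun p => b p - a p) := by
  have E2 := ip_mu h ε a b c
  have E3 := grad_identity h a b c
  have E1 : ip h (mu h ε a b c) (fun p => c p - b p)
      = - (τ * gip h (mu h ε a b c) (mu h ε a b c)) := by
    have e : ∀ p : Grid m, mu h ε a b c p * (c p - b p)
        = τ * (mu h ε a b c p * lapH h (mu h ε a b c) p) := by
      intro p
      have h1 := hst p
      rw [div_eq_iff (ne_of_gt hτ)] at h1
      rw [h1]; ring
    have e2 : ip h (mu h ε a b c) (fun p => c p - b p)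
        = τ * ip h (mu h ε a b c) (lapH h (mu h ε a b c)) := by
      simp only [ip]
      rw [Finset.sum_congr rfl (fun p _ => e p), ← Finset.mul_sum]
      ring
    rw [e2, sbp]; ring
  have P1 : 0 ≤ τ * gip h (mu h ε a b c) (mu h ε a b c) :=
    mul_nonneg hτ.le (gip_self_nonneg hh.le _)
  have P2 : 0 ≤ gip h (fun p => c p - 2 * b p + a p) (fun p => c p - 2 * b p + a p) :=
    gip_self_nonneg hh.le _
  have G1 := gradsq_eq (m := m) h (fun p => c p - b p)
  have G2 := gradsq_eq (m := m) h (fun p => b p - a p)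
  have G3 := gradsq_eq (m := m) h c
  have G4 := gradsq_eq (m := m) h b
  simp only [Fh, G1, G2, G3, G4]
  linarith

lemma gradsq_nonneg (h : ℝ) (hh : 0 ≤ h) (f : Grid m → ℝ) : 0 ≤ gradsq h f := by
  rw [gradsq_eq]; exact gip_self_nonneg hh f

/-- Unconditional energy stability of the second-order PFC scheme:
`F_h(φ^κ) ≤ F_h(φ¹) + ½‖∇_h(φ¹ - φ⁰)‖₂²` for all `κ ≥ 1`. -/
theorem stmt6 (L : ℝ) (hL : 0 < L) (m : ℕ) [NeZero m] (h : ℝ) (hh : h = L / m)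
    (ε : ℝ) (hε : 0 < ε) (hε1 : ε < 1) (τ : ℝ) (hτ : 0 < τ)
    (φ : ℕ → Grid m → ℝ)
    (hs : ∀ κ : ℕ, 1 ≤ κ → SchemeStep h τ ε (φ (κ - 1)) (φ κ) (φ (κ + 1))) :
    ∀ κ : ℕ, 1 ≤ κ →
      Fh h ε (φ κ) ≤ Fh h ε (φ 1) + (1 / 2) * gradsq h (fun p => φ 1 p - φ 0 p) := by
  have hm : (0:ℝ) < m := by
    exact_mod_cast Nat.pos_of_ne_zero (NeZero.ne m)
  have hh0 : 0 < h := by rw [hh]; exact div_pos hL hm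
  have mono : ∀ n : ℕ, Fh h ε (φ (n+1)) + (1/2) * gradsq h (fun p => φ (n+1) p - φ n p)
      ≤ Fh h ε (φ 1) + (1/2) * gradsq h (fun p => φ 1 p - φ 0 p) := by
    intro n
    induction n with
    | zero => exact le_refl _
    | succ k ih =>
      have hstep : SchemeStep h τ ε (φ k) (φ (k+1)) (φ (k+2)) := by
        have := hs (k+1) (by omega)
        simpa using this
      exact le_trans (step_lemma h ε τ hh0 hτ (φ k) (φ (k+1)) (φ (k+2)) hstep) ih
  intro κ hκ
  obtain ⟨j, rfl⟩ : ∃ j, κ = j + 1 := ⟨κ - 1, by omega⟩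
  have hmono := mono j
  have nn : 0 ≤ gradsq h (fun p => φ (j+1) p - φ j p) := gradsq_nonneg h hh0.le _
  linarith
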